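/- arXiv:1703.06861 — 5 statements merged into one kernel-verified Lean document; each statement's English description precedes it below -/
import Mathlib

section
/- Let (C ⊕ D, d) be a chain complex over 𝔽₂ whose differential decomposes in block form as d = [[d_CC, d_CD],[d_DC, d_DD]], and suppose (D, d_DD) is contractible with a null-homotopy H : D → D (i.e. d_DD ∘ H + H ∘ d_DD = id_D and H ∘ H = 0, H ∘ d_DD ∘ H = H). Then the map d' := d_CC + d_CD ∘ H ∘ d_DC is a differential on C, i.e. d' ∘ d' = 0. -/
lemma char2_add_eq_zero_iff {M : Type*} [AddCommGroup M] [Module (ZMod 2) M] (a b : M) :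
    a + b = 0 ↔ a = b := by
  have h2 : (2 : ZMod 2) = 0 := by decide
  have hb : b + b = 0 := by rw [← two_smul (ZMod 2) b, h2, zero_smul]
  constructor
  · intro h
    rw [eq_neg_of_add_eq_zero_left h]
    exact neg_eq_of_add_eq_zero_left hb
  · rintro rfl
    rw [← two_smul (ZMod 2) a, h2, zero_smul]

lemma char2_self_add {M : Type*} [AddCommGroup M] [Module (ZMod 2) M] (a : M) :
    a + a = 0 := (char2_add_eq_zero_iff a a).mpr rfl

/-- Cancellation Lemma setup over 𝔽₂: the twisted differential
`d' = d_CC + d_CD ∘ H ∘ d_DC` squares to zero. -/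
theorem twisted_differential_squares_to_zero
    {C D : Type*} [AddCommGroup C] [AddCommGroup D]
    [Module (ZMod 2) C] [Module (ZMod 2) D]
    (dCC : C →ₗ[ZMod 2] C) (dCD : D →ₗ[ZMod 2] C)
    (dDC : C →ₗ[ZMod 2] D) (dDD : D →ₗ[ZMod 2] D)
    (h1 : dCC ∘ₗ dCC + dCD ∘ₗ dDC = 0)
    (h2 : dCC ∘ₗ dCD + dCD ∘ₗ dDD = 0)
    (h3 : dDC ∘ₗ dCC + dDD ∘ₗ dDC = 0)
    (h4 : dDC ∘ₗ dCD + dDD ∘ₗ dDD = 0)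
    (H : D →ₗ[ZMod 2] D)
    (hH1 : dDD ∘ₗ H + H ∘ₗ dDD = LinearMap.id)
    (hH2 : H ∘ₗ H = 0)
    (hH3 : H ∘ₗ dDD ∘ₗ H = H) :
    (dCC + dCD ∘ₗ H ∘ₗ dDC) ∘ₗ (dCC + dCD ∘ₗ H ∘ₗ dDC) = 0 := by
  ext x
  have E1 : ∀ c : C, dCC (dCC c) = dCD (dDC c) := fun c =>
    (char2_add_eq_zero_iff _ _).mp (by simpa using LinearMap.ext_iff.mp h1 c)
  have E2 : ∀ y : D, dCC (dCD y) = dCD (dDD y) := fun y =>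
    (char2_add_eq_zero_iff _ _).mp (by simpa using LinearMap.ext_iff.mp h2 y)
  have E3 : ∀ c : C, dDC (dCC c) = dDD (dDC c) := fun c =>
    (char2_add_eq_zero_iff _ _).mp (by simpa using LinearMap.ext_iff.mp h3 c)
  have E4 : ∀ y : D, dDC (dCD y) = dDD (dDD y) := fun y =>
    (char2_add_eq_zero_iff _ _).mp (by simpa using LinearMap.ext_iff.mp h4 y)
  have E5 : ∀ y : D, dDD (H y) = y + H (dDD y) := fun y => by
    have h := LinearMap.ext_iff.mp hH1 y
    simp only [LinearMap.add_apply, LinearMap.comp_apply, LinearMap.id_apply] at h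
    apply (char2_add_eq_zero_iff _ _).mp
    rw [show dDD (H y) + (y + H (dDD y)) = (dDD (H y) + H (dDD y)) + y by abel, h,
      char2_self_add]
  have E6 : ∀ y : D, H (H y) = 0 := fun y => by
    simpa using LinearMap.ext_iff.mp hH2 y
  set y := dDC x with hy
  simp only [LinearMap.comp_apply, LinearMap.add_apply, LinearMap.zero_apply, map_add, ← hy]
  rw [E1, E2, E3, E4, E5 y]
  rw [map_add, map_add, E5 (dDD y)]
  rw [show dDD y + (dDD y + H (dDD (dDD y))) = (dDD y + dDD y) + H (dDD (dDD y)) by abel,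
    char2_self_add, zero_add, E6, map_zero]
  show dCD y + dCD (H (dDD y)) + (dCD y + dCD (H (dDD y)) + 0) = 0
  calc dCD y + dCD (H (dDD y)) + (dCD y + dCD (H (dDD y)) + 0)
      = (dCD y + dCD y) + (dCD (H (dDD y)) + dCD (H (dDD y))) := by abel
    _ = 0 := by rw [char2_self_add, char2_self_add, add_zero]
end

section
/- Let (C ⊕ D, d) be a chain complex over 𝔽₂ with block differential components d_CC, d_CD, d_DC, d_DD, and let H : D → D be a null-homotopy of (D, d_DD) satisfying d_DD H + H d_DD = id_D, H² = 0, and H d_DD H = H. Equip C with the twisted differential d' = d_CC + d_CD H d_DC. Then the map F : C → C ⊕ D defined by F(c) = (c, H(d_DC(c))) is a chain map, i.e. d ∘ F = F ∘ d'. -/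
/-- Cancellation Lemma over 𝔽₂: the map `F(c) = (c, H(d_DC c))` is a chain map
from `(C, d')` (twisted differential) to `(C ⊕ D, d)`. -/
theorem cancellation_F_is_chain_map
    {C D : Type*} [AddCommGroup C] [AddCommGroup D]
    [Module (ZMod 2) C] [Module (ZMod 2) D]
    (dCC : C →ₗ[ZMod 2] C) (dCD : D →ₗ[ZMod 2] C)
    (dDC : C →ₗ[ZMod 2] D) (dDD : D →ₗ[ZMod 2] D)
    (h1 : dCC ∘ₗ dCC + dCD ∘ₗ dDC = 0)
    (h2 : dCC ∘ₗ dCD + dCD ∘ₗ dDD = 0)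
    (h3 : dDC ∘ₗ dCC + dDD ∘ₗ dDC = 0)
    (h4 : dDC ∘ₗ dCD + dDD ∘ₗ dDD = 0)
    (H : D →ₗ[ZMod 2] D)
    (hH1 : dDD ∘ₗ H + H ∘ₗ dDD = LinearMap.id)
    (hH2 : H ∘ₗ H = 0)
    (hH3 : H ∘ₗ dDD ∘ₗ H = H)
    (d' : C →ₗ[ZMod 2] C) (hd' : d' = dCC + dCD ∘ₗ H ∘ₗ dDC)
    (d : C × D →ₗ[ZMod 2] C × D)
    (hd : ∀ c x, d (c, x) = (dCC c + dCD x, dDC c + dDD x))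
    (F : C →ₗ[ZMod 2] C × D)
    (hF : ∀ c, F c = (c, H (dDC c))) :
    d ∘ₗ F = F ∘ₗ d' := by

  have key : ∀ (y : D), y + y = 0 := fun y => by
    have : y + y = (2 : ZMod 2) • y := by rw [two_smul]
    rw [this, show (2 : ZMod 2) = 0 from rfl, zero_smul]
  have two : ∀ (a b : D), a + (a + b) = b := fun a b => by
    rw [← add_assoc, key, zero_add]
  have cancel : ∀ (a b : D), a + b = 0 → a = b := fun a b h => by
    calc a = a + (b + b) := by rw [key, add_zero]
    _ = (a + b) + b := by abel
    _ = b := by rw [h, zero_add]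
  apply LinearMap.ext; intro c
  have e1 := LinearMap.congr_fun h3 c
  have e4 := LinearMap.congr_fun h4 (H (dDC c))
  have eH1x := LinearMap.congr_fun hH1 (dDC c)
  have eH3 := LinearMap.congr_fun hH3 (dDD (dDC c))
  simp only [LinearMap.comp_apply, LinearMap.add_apply, LinearMap.id_apply,
    LinearMap.zero_apply] at e1 e4 eH1x eH3
  have hA : dDC (dCC c) = dDD (dDC c) := cancel _ _ e1
  have hE4 : dDC (dCD (H (dDC c))) = dDD (dDD (H (dDC c))) := cancel _ _ e4
  have hd2 : dDD (H (dDC c)) = dDC c + H (dDD (dDC c)) := by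
    calc dDD (H (dDC c)) = dDD (H (dDC c)) + (H (dDD (dDC c)) + H (dDD (dDC c))) := by
          rw [key, add_zero]
    _ = (dDD (H (dDC c)) + H (dDD (dDC c))) + H (dDD (dDC c)) := by abel
    _ = dDC c + H (dDD (dDC c)) := by rw [eH1x]
  rw [LinearMap.comp_apply, LinearMap.comp_apply, hF, hd, hd', hF]
  simp only [LinearMap.add_apply, LinearMap.comp_apply]
  refine Prod.ext rfl ?_
  simp only [map_add, hA, hE4, hd2, eH3]
  rw [two, two]
end

section
/- Let (C ⊕ D, d) be a chain complex over 𝔽₂ with block components d_CC, d_CD, d_DC, d_DD, and let H : D → D satisfy d_DD H + H d_DD = id_D, H² = 0, and H d_DD H = H. Equip C with d' = d_CC + d_CD H d_DC. Then the map G : C ⊕ D → C defined by G(c, x) = c + d_CD(H(x)) is a chain map, i.e. d' ∘ G = G ∘ d. -/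
lemma char2_cancel {C : Type*} [AddCommGroup C] [Module (ZMod 2) C] (a : C) :
    a + a = 0 := by
  have h : ((2 : ZMod 2)) • a = a + a := two_smul _ a
  have h2 : ((2 : ZMod 2)) = 0 := rfl
  rw [← h, h2, zero_smul]

lemma char2_move {C : Type*} [AddCommGroup C] [Module (ZMod 2) C] {a b c : C}
    (h : a + b = c) : a = c + b := by
  rw [← h, add_assoc, char2_cancel, add_zero]

/-- Cancellation Lemma over 𝔽₂: the map `G(c, x) = c + d_CD(H x)` is a chain map
from `(C ⊕ D, d)` to `(C, d')` (twisted differential). -/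
theorem cancellation_G_is_chain_map
    {C D : Type*} [AddCommGroup C] [AddCommGroup D]
    [Module (ZMod 2) C] [Module (ZMod 2) D]
    (dCC : C →ₗ[ZMod 2] C) (dCD : D →ₗ[ZMod 2] C)
    (dDC : C →ₗ[ZMod 2] D) (dDD : D →ₗ[ZMod 2] D)
    (h1 : dCC ∘ₗ dCC + dCD ∘ₗ dDC = 0)
    (h2 : dCC ∘ₗ dCD + dCD ∘ₗ dDD = 0)
    (h3 : dDC ∘ₗ dCC + dDD ∘ₗ dDC = 0)
    (h4 : dDC ∘ₗ dCD + dDD ∘ₗ dDD = 0)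
    (H : D →ₗ[ZMod 2] D)
    (hH1 : dDD ∘ₗ H + H ∘ₗ dDD = LinearMap.id)
    (hH2 : H ∘ₗ H = 0)
    (hH3 : H ∘ₗ dDD ∘ₗ H = H)
    (d' : C →ₗ[ZMod 2] C) (hd' : d' = dCC + dCD ∘ₗ H ∘ₗ dDC)
    (d : C × D →ₗ[ZMod 2] C × D)
    (hd : ∀ c x, d (c, x) = (dCC c + dCD x, dDC c + dDD x))
    (G : C × D →ₗ[ZMod 2] C)
    (hG : ∀ c x, G (c, x) = c + dCD (H x)) :
    d' ∘ₗ G = G ∘ₗ d := by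
  have eq2 : ∀ y : D, dCC (dCD y) = dCD (dDD y) := by
    intro y
    have h := congrArg (fun f => f y) h2
    simp only [LinearMap.add_apply, LinearMap.comp_apply, LinearMap.zero_apply] at h
    simpa using char2_move h
  have eq4 : ∀ y : D, dDC (dCD y) = dDD (dDD y) := by
    intro y
    have h := congrArg (fun f => f y) h4
    simp only [LinearMap.add_apply, LinearMap.comp_apply, LinearMap.zero_apply] at h
    simpa using char2_move h
  have eqH1 : ∀ y : D, dDD (H y) = y + H (dDD y) := by
    intro y
    have h := congrArg (fun f => f y) hH1
    simp only [LinearMap.add_apply, LinearMap.comp_apply, LinearMap.id_apply] at h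
    exact char2_move h
  have eqz : ∀ y : D, H (dDC (dCD (H y))) = 0 := by
    intro y
    have step : dDD (dDD (H y)) = H (dDD (dDD y)) := by
      rw [eqH1, map_add, eqH1, ← add_assoc, char2_cancel, zero_add]
    have hH2y := congrArg (fun f => f (dDD (dDD y))) hH2
    simp only [LinearMap.comp_apply, LinearMap.zero_apply] at hH2y
    rw [eq4, step, hH2y]
  apply LinearMap.ext
  rintro ⟨c, x⟩
  simp only [LinearMap.comp_apply, hd, hG, hd', LinearMap.add_apply, map_add, eq2, eqz,
    eqH1, map_zero, add_zero]
  abel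
end

section
/- In the setting of the Cancellation Lemma over 𝔽₂, the maps F : (C, d') → (C ⊕ D, d) and G : (C ⊕ D, d) → (C, d') are chain homotopy equivalences; in particular they induce mutually inverse isomorphisms on homology H(C, d') ≅ H(C ⊕ D, d). -/
lemma char2_add_self {M : Type*} [AddCommGroup M] [Module (ZMod 2) M] (x : M) :
    x + x = 0 := by
  have h2 : (2 : ZMod 2) = 0 := rfl
  rw [← two_smul (ZMod 2) x, h2, zero_smul]

lemma char2_eq_of_add_eq_zero {M : Type*} [AddCommGroup M] [Module (ZMod 2) M] {a b : M}
    (h : a + b = 0) : a = b := by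
  have h' : a + (b + b) = (a + b) + b := by abel
  rw [char2_add_self, h, zero_add, add_zero] at h'
  exact h'

/-- A chain map `f : (M, dM) → (N, dN)` over 𝔽₂ is a chain homotopy equivalence if
there is a chain map back whose composites are chain homotopic to the identities. -/
def IsChainHomotopyEquiv {M N : Type*} [AddCommGroup M] [AddCommGroup N]
    [Module (ZMod 2) M] [Module (ZMod 2) N]
    (dM : M →ₗ[ZMod 2] M) (dN : N →ₗ[ZMod 2] N) (f : M →ₗ[ZMod 2] N) : Prop :=
  dN ∘ₗ f = f ∘ₗ dM ∧
  ∃ g : N →ₗ[ZMod 2] M,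
    dM ∘ₗ g = g ∘ₗ dN ∧
    (∃ K : M →ₗ[ZMod 2] M, LinearMap.id + g ∘ₗ f = dM ∘ₗ K + K ∘ₗ dM) ∧
    (∃ K : N →ₗ[ZMod 2] N, LinearMap.id + f ∘ₗ g = dN ∘ₗ K + K ∘ₗ dN)

/-- Cancellation Lemma over 𝔽₂: `F` and `G` are chain homotopy equivalences between
`(C, d')` and `(C ⊕ D, d)`; in particular they induce mutually inverse isomorphisms
on homology. -/
theorem cancellation_F_G_chain_homotopy_equivalences
    {C D : Type*} [AddCommGroup C] [AddCommGroup D]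
    [Module (ZMod 2) C] [Module (ZMod 2) D]
    (dCC : C →ₗ[ZMod 2] C) (dCD : D →ₗ[ZMod 2] C)
    (dDC : C →ₗ[ZMod 2] D) (dDD : D →ₗ[ZMod 2] D)
    (h1 : dCC ∘ₗ dCC + dCD ∘ₗ dDC = 0)
    (h2 : dCC ∘ₗ dCD + dCD ∘ₗ dDD = 0)
    (h3 : dDC ∘ₗ dCC + dDD ∘ₗ dDC = 0)
    (h4 : dDC ∘ₗ dCD + dDD ∘ₗ dDD = 0)
    (H : D →ₗ[ZMod 2] D)
    (hH1 : dDD ∘ₗ H + H ∘ₗ dDD = LinearMap.id)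
    (hH2 : H ∘ₗ H = 0)
    (hH3 : H ∘ₗ dDD ∘ₗ H = H)
    (d' : C →ₗ[ZMod 2] C) (hd' : d' = dCC + dCD ∘ₗ H ∘ₗ dDC)
    (d : C × D →ₗ[ZMod 2] C × D)
    (hd : ∀ c x, d (c, x) = (dCC c + dCD x, dDC c + dDD x))
    (F : C →ₗ[ZMod 2] C × D)
    (hF : ∀ c, F c = (c, H (dDC c)))
    (G : C × D →ₗ[ZMod 2] C)
    (hG : ∀ c x, G (c, x) = c + dCD (H x)) :
    IsChainHomotopyEquiv d' d F ∧ IsChainHomotopyEquiv d d' G ∧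
    -- `F` and `G` induce mutually inverse isomorphisms on homology:
    (∀ c ∈ LinearMap.ker d', G (F c) + c ∈ LinearMap.range d') ∧
    (∀ p ∈ LinearMap.ker d, F (G p) + p ∈ LinearMap.range d) := by
  have e2 : ∀ x, dCC (dCD x) = dCD (dDD x) := fun x =>
    char2_eq_of_add_eq_zero (by simpa using LinearMap.congr_fun h2 x)
  have e3 : ∀ c, dDC (dCC c) = dDD (dDC c) := fun c =>
    char2_eq_of_add_eq_zero (by simpa using LinearMap.congr_fun h3 c)
  have e4 : ∀ x, dDC (dCD x) = dDD (dDD x) := fun x =>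
    char2_eq_of_add_eq_zero (by simpa using LinearMap.congr_fun h4 x)
  have eHH : ∀ y, H (H y) = 0 := fun y => by
    simpa using LinearMap.congr_fun hH2 y
  have eH : ∀ y, dDD (H y) = y + H (dDD y) := by
    intro y
    have h := LinearMap.congr_fun hH1 y
    simp only [LinearMap.add_apply, LinearMap.comp_apply, LinearMap.id_apply] at h
    have h' : dDD (H y) + (H (dDD y) + H (dDD y)) = y + H (dDD y) := by
      rw [← add_assoc, h]
    rwa [char2_add_self, add_zero] at h'
  have eH3 : ∀ y, H (dDD (H y)) = H y := fun y => by
    simpa using LinearMap.congr_fun hH3 y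
  have key : ∀ y, H (dDD (dDD (H y))) = 0 := by
    intro y
    rw [eH y, map_add, map_add, eH3 (dDD y), char2_add_self]
  have keyCD : ∀ x, H (dDC (dCD (H x))) = 0 := by
    intro x
    rw [e4, key]
  have ed' : ∀ c, d' c = dCC c + dCD (H (dDC c)) := by
    intro c; rw [hd']; simp
  -- F is a chain map
  have hFchain : d ∘ₗ F = F ∘ₗ d' := by
    ext c
    · simp only [LinearMap.comp_apply, hF, hd, ed']
    · simp only [LinearMap.comp_apply, hF, hd, ed', map_add, keyCD, add_zero, e3]
      rw [eH (dDC c)]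
      abel_nf
      simp [two_zsmul, char2_add_self]
  -- G is a chain map
  have hGchain : d' ∘ₗ G = G ∘ₗ d := by
    apply LinearMap.ext
    rintro ⟨c, x⟩
    simp only [LinearMap.comp_apply, hd, hG, map_add, ed', keyCD, map_zero, add_zero, e2]
    rw [eH x, map_add]
    abel
  -- G ∘ F is homotopic to the identity via K = 0
  have hGF : LinearMap.id + G ∘ₗ F = d' ∘ₗ (0 : C →ₗ[ZMod 2] C) + (0 : C →ₗ[ZMod 2] C) ∘ₗ d' := by
    apply LinearMap.ext
    intro c
    simp [hF, hG, eHH, char2_add_self]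
  -- F ∘ G is homotopic to the identity via K (c, x) = (0, H x)
  set K2 : C × D →ₗ[ZMod 2] C × D :=
    (LinearMap.inr (ZMod 2) C D) ∘ₗ H ∘ₗ (LinearMap.snd (ZMod 2) C D) with hK2
  have hFG : LinearMap.id + F ∘ₗ G = d ∘ₗ K2 + K2 ∘ₗ d := by
    apply LinearMap.ext
    rintro ⟨c, x⟩
    have hK2p : ∀ (a : C) (y : D), K2 (a, y) = (0, H y) := by
      intro a y; simp [hK2]
    simp only [LinearMap.add_apply, LinearMap.comp_apply, LinearMap.id_apply, hG, hd, hK2p,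
      hF, map_add, keyCD, add_zero, map_zero, zero_add]
    rw [eH x]
    apply Prod.ext
    · simp only [Prod.fst_add]
      abel_nf
      simp [two_zsmul, char2_add_self]
    · simp only [Prod.snd_add]
      abel_nf
      simp [two_zsmul, char2_add_self]
  refine ⟨⟨hFchain, G, hGchain, ⟨0, hGF⟩, ⟨K2, hFG⟩⟩,
    ⟨hGchain, F, hFchain, ⟨K2, hFG⟩, ⟨0, hGF⟩⟩, ?_, ?_⟩
  · intro c _
    refine ⟨0, ?_⟩
    have := LinearMap.congr_fun hGF c
    simpa [add_comm] using this.symm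
  · rintro p hp
    refine ⟨K2 p, ?_⟩
    have hker : d p = 0 := hp
    have := LinearMap.congr_fun hFG p
    simp only [LinearMap.add_apply, LinearMap.comp_apply, LinearMap.id_apply, hker, map_zero,
      add_zero] at this
    rw [← this]
    abel
end

section
/- Let (C ⊕ D, d) be a chain complex over 𝔽₂ with (D, d_DD) contractible via null-homotopy H (satisfying dH + Hd = id, H² = 0, HdH = H), and let T ⊆ C ⊕ D be a subcomplex (i.e. d(T) ⊆ T) that is compatible with the decomposition in the sense that T = (T ∩ C) ⊕ (T ∩ D) and H(T ∩ D) ⊆ T ∩ D. Then the cancellation map G : C ⊕ D → C, G(c, x) = c + d_CD H x, satisfies G(T) ⊆ T ∩ C, and T ∩ C is a subcomplex of (C, d') where d' = d_CC + d_CD H d_DC. -/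
/-- Cancellation respects compatible subcomplexes: if `T ⊆ C ⊕ D` is a subcomplex
split by the decomposition with `H(T ∩ D) ⊆ T ∩ D`, then the cancellation map
`G(c, x) = c + d_CD (H x)` sends `T` into `T ∩ C`, and `T ∩ C` is a subcomplex of
`(C, d')` with the twisted differential `d' = d_CC + d_CD H d_DC`. -/
theorem cancellation_preserves_subcomplex
    {C D : Type*} [AddCommGroup C] [AddCommGroup D]
    [Module (ZMod 2) C] [Module (ZMod 2) D]
    (dCC : C →ₗ[ZMod 2] C) (dCD : D →ₗ[ZMod 2] C)
    (dDC : C →ₗ[ZMod 2] D) (dDD : D →ₗ[ZMod 2] D)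
    (h1 : dCC ∘ₗ dCC + dCD ∘ₗ dDC = 0)
    (h2 : dCC ∘ₗ dCD + dCD ∘ₗ dDD = 0)
    (h3 : dDC ∘ₗ dCC + dDD ∘ₗ dDC = 0)
    (h4 : dDC ∘ₗ dCD + dDD ∘ₗ dDD = 0)
    (H : D →ₗ[ZMod 2] D)
    (hH1 : dDD ∘ₗ H + H ∘ₗ dDD = LinearMap.id)
    (hH2 : H ∘ₗ H = 0)
    (hH3 : H ∘ₗ dDD ∘ₗ H = H)
    (d : C × D →ₗ[ZMod 2] C × D)
    (hd : ∀ c x, d (c, x) = (dCC c + dCD x, dDC c + dDD x))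
    (d' : C →ₗ[ZMod 2] C) (hd' : d' = dCC + dCD ∘ₗ H ∘ₗ dDC)
    (G : C × D →ₗ[ZMod 2] C)
    (hG : ∀ c x, G (c, x) = c + dCD (H x))
    (T : Submodule (ZMod 2) (C × D))
    -- `T` is a subcomplex:
    (hT : ∀ p ∈ T, d p ∈ T)
    -- `T = (T ∩ C) ⊕ (T ∩ D)`:
    (hsplit : ∀ c x, (c, x) ∈ T → ((c, (0 : D)) ∈ T ∧ (((0 : C), x) ∈ T)))
    -- `H(T ∩ D) ⊆ T ∩ D`:
    (hHT : ∀ x : D, ((0 : C), x) ∈ T → (((0 : C), H x) ∈ T)) :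
    (∀ p ∈ T, ((G p, (0 : D)) ∈ T)) ∧
    (∀ c : C, ((c, (0 : D)) ∈ T) → ((d' c, (0 : D)) ∈ T)) := by
  constructor
  · rintro ⟨c, x⟩ hp
    obtain ⟨hc, hx⟩ := hsplit c x hp
    have hHx := hHT x hx
    have hdHx := hT _ hHx
    rw [hd] at hdHx
    simp only [map_zero, zero_add] at hdHx
    have h5 := (hsplit _ _ hdHx).1
    have := T.add_mem hc h5
    rw [hG]
    simpa using this
  · intro c hc
    have hdc := hT _ hc
    rw [hd] at hdc
    simp only [map_zero, add_zero] at hdc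
    obtain ⟨h5, h6⟩ := hsplit _ _ hdc
    have h7 := hHT _ h6
    have h8 := hT _ h7
    rw [hd] at h8
    simp only [map_zero, zero_add] at h8
    have h9 := (hsplit _ _ h8).1
    have := T.add_mem h5 h9
    rw [hd']
    simpa using this
end
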